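/- Let θ be an invertible antisymmetric real 4×4 matrix, g a symmetric positive definite real 4×4 matrix, e^σ := √(det θ · det g), G := e^{−σ} θ g θᵀ, and J := e^{−σ/2} θ g. Then (1/4)·tr(G g) ≥ 1, and equality holds if and only if G g = I₄, equivalently J² = −I₄, equivalently G = g⁻¹ (i.e. the effective metric G_{μν} coincides with the induced metric g_{μν}, so that J is an almost-complex structure). -/

import Mathlib

open Matrix

/-!
Write `g = Bᴴ B`. Then `G g = B⁻¹ (B G Bᴴ) B` is similar to the positive semidefinite matrix
`B G Bᴴ`, whose determinant `det G · det g` is `1` because `e^{2σ} = det θ · det g`, where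
`det θ ≥ 0` is the square of the Pfaffian. AM–GM on the eigenvalues of `B G Bᴴ` gives
`tr (G g) ≥ 4`, with equality iff all eigenvalues are `1`, i.e. `B G Bᴴ = 1`, i.e. `G g = 1`.
Finally `J² = -G g` because `θᵀ = -θ`.
-/

theorem Real.card_le_sum_and_sum_eq_card_iff_of_prod_eq_one {ι : Type*} [Fintype ι]
    {z : ι → ℝ} (hz : ∀ i, 0 ≤ z i) (hprod : ∏ i, z i = 1) :
    (Fintype.card ι : ℝ) ≤ ∑ i, z i ∧ (∑ i, z i = Fintype.card ι ↔ ∀ i, z i = 1) := by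
  rcases isEmpty_or_nonempty ι with hι | hι
  · simp
  set w : ι → ℝ := fun _ ↦ (Fintype.card ι : ℝ)⁻¹
  have hcard : (0 : ℝ) < Fintype.card ι := by exact_mod_cast Fintype.card_pos
  have hw : ∀ i ∈ Finset.univ, 0 < w i := fun _ _ ↦ inv_pos.2 hcard
  have hw1 : ∑ i, w i = 1 := by simp [w, hcard.ne']
  have hgeom : ∏ i, z i ^ w i = 1 := by
    rw [Real.finsetProd_rpow _ _ (fun i _ ↦ hz i), hprod, Real.one_rpow]
  have harith : ∑ i, w i * z i = (∑ i, z i) / Fintype.card ι := by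
    simp [w, ← Finset.mul_sum, div_eq_inv_mul]
  have amgm := Real.geom_mean_le_arith_mean_weighted _ w z (fun i hi ↦ (hw i hi).le) hw1
    (fun i _ ↦ hz i)
  have heq := Real.geom_mean_eq_arith_mean_weighted_iff_of_pos' _ w z hw hw1 (fun i _ ↦ hz i)
  rw [hgeom, harith, one_le_div hcard] at amgm
  rw [hgeom, harith, eq_comm, div_eq_one_iff_eq hcard.ne'] at heq
  refine ⟨amgm, fun hsum ↦ ?_, fun h ↦ by simp [h]⟩
  intro i
  rw [heq.1 hsum i (Finset.mem_univ i), hsum, div_self hcard.ne']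

theorem Matrix.PosSemidef.card_le_trace_and_trace_eq_card_iff_of_det_eq_one {n : Type*}
    [Fintype n] [DecidableEq n] {M : Matrix n n ℝ} (hM : M.PosSemidef) (hdet : M.det = 1) :
    (Fintype.card n : ℝ) ≤ M.trace ∧ (M.trace = Fintype.card n ↔ M = 1) := by
  have hprod : ∏ i, hM.1.eigenvalues i = 1 := by
    simpa using hM.1.det_eq_prod_eigenvalues.symm.trans hdet
  have htr : M.trace = ∑ i, hM.1.eigenvalues i := by simpa using hM.1.trace_eq_sum_eigenvalues
  obtain ⟨hle, heq⟩ :=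
    Real.card_le_sum_and_sum_eq_card_iff_of_prod_eq_one hM.eigenvalues_nonneg hprod
  refine ⟨htr ▸ hle, fun h ↦ ?_, fun h ↦ by simp [h]⟩
  rw [hM.1.spectral_theorem, show hM.1.eigenvalues = 1 from funext (heq.1 (htr ▸ h))]
  simp

open scoped MatrixOrder in
theorem Matrix.PosSemidef.card_le_trace_mul_and_trace_mul_eq_card_iff {n : Type*}
    [Fintype n] [DecidableEq n] {G g : Matrix n n ℝ} (hG : G.PosSemidef) (hg : g.PosDef)
    (hdet : (G * g).det = 1) :
    (Fintype.card n : ℝ) ≤ (G * g).trace ∧ ((G * g).trace = Fintype.card n ↔ G * g = 1) := by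
  obtain ⟨B, rfl⟩ := CStarAlgebra.nonneg_iff_eq_star_mul_self.mp hg.posSemidef.nonneg
  have hB : IsUnit B := isUnit_of_mul_isUnit_right hg.isUnit
  have hBdet : IsUnit B.det := (isUnit_iff_isUnit_det B).mp hB
  have hconj : G * (star B * B) = B⁻¹ * (B * G * Bᴴ) * B := by
    simp only [star_eq_conjTranspose, Matrix.mul_assoc, nonsing_inv_mul_cancel_left _ _ hBdet]
  have hconj_one (M : Matrix n n ℝ) : B⁻¹ * M * B = 1 ↔ M = 1 :=
    ⟨fun h ↦ by
      simpa [Matrix.mul_assoc, mul_nonsing_inv _ hBdet, mul_nonsing_inv_cancel_left _ _ hBdet]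
        using congr(B * $h * B⁻¹),
      fun h ↦ by simp [h, nonsing_inv_mul _ hBdet]⟩
  rw [hconj, det_conj' hB] at hdet
  rw [hconj, trace_conj' hB, hconj_one]
  exact (hG.mul_mul_conjTranspose_same B).card_le_trace_and_trace_eq_card_iff_of_det_eq_one hdet

theorem Matrix.det_eq_sq_of_transpose_eq_neg {R : Type*} [CommRing R] [NoZeroDivisors R]
    [CharZero R] {K : Matrix (Fin 4) (Fin 4) R} (hK : Kᵀ = -K) :
    K.det = (K 0 1 * K 2 3 - K 0 2 * K 1 3 + K 0 3 * K 1 2) ^ 2 := by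
  have e (i j : Fin 4) : K j i = -K i j := congr_fun₂ hK i j
  have d (i : Fin 4) : K i i = 0 := self_eq_neg.mp (e i i)
  rw [det_succ_row_zero, Fin.sum_univ_four]
  simp [det_fin_three, Fin.succAbove, Fin.lt_def, d, e 1 0, e 2 0, e 3 0, e 2 1, e 3 1, e 3 2]
  ring

theorem trace_Gg_ge_one_and_equality_cases
    (θ g G J : Matrix (Fin 4) (Fin 4) ℝ)
    (hθ : θᵀ = -θ) (hθu : IsUnit θ) (hg : g.PosDef)
    (hG : G = (Real.sqrt (θ.det * g.det))⁻¹ • (θ * g * θᵀ))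
    (hJ : J = (Real.sqrt (Real.sqrt (θ.det * g.det)))⁻¹ • (θ * g)) :
    1 ≤ (G * g).trace / 4 ∧
    ((G * g).trace / 4 = 1 ↔ G * g = 1) ∧
    (G * g = 1 ↔ J ^ 2 = -1) ∧
    (G * g = 1 ↔ G = g⁻¹) := by
  have hθdet : 0 < θ.det := lt_of_le_of_ne (by rw [det_eq_sq_of_transpose_eq_neg hθ]; positivity)
    ((isUnit_iff_isUnit_det θ).mp hθu).ne_zero.symm
  set s := √(θ.det * g.det)
  have hs : 0 < s := Real.sqrt_pos.2 (mul_pos hθdet hg.det_pos)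
  have hs2 : s ^ 2 = θ.det * g.det := Real.sq_sqrt (mul_pos hθdet hg.det_pos).le
  have hGpsd : G.PosSemidef := by
    rw [hG, ← conjTranspose_eq_transpose_of_trivial]
    exact (hg.posSemidef.mul_mul_conjTranspose_same θ).smul (inv_nonneg.2 hs.le)
  have hdet : (G * g).det = 1 := by
    rw [hG, det_mul, det_smul, det_mul, det_mul, det_transpose, Fintype.card_fin,
      inv_pow, show s ^ 4 = (s ^ 2) ^ 2 by ring, hs2]
    field_simp [hg.det_pos.ne']
  have hJ2 : J ^ 2 = -(G * g) := by
    rw [hJ, hG, hθ, sq, smul_mul_smul_comm, ← mul_inv, Real.mul_self_sqrt hs.le]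
    simp [Matrix.mul_assoc]
  obtain ⟨hle, heq⟩ := hGpsd.card_le_trace_mul_and_trace_mul_eq_card_iff hg hdet
  rw [Fintype.card_fin, Nat.cast_ofNat] at hle heq
  refine ⟨by linarith, by rw [div_eq_one_iff_eq four_ne_zero, heq], ?_, ?_⟩
  · rw [hJ2, neg_inj]
  · exact ⟨fun h ↦ (inv_eq_left_inv h).symm,
      fun h ↦ h ▸ nonsing_inv_mul g hg.det_pos.ne'.isUnit⟩
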